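/- arXiv:1107.2102 — 3 statements merged into one kernel-verified Lean document; each statement's English description precedes it below -/
import Mathlib

section
/- Let S be a representable R-module over a commutative Noetherian ring R. If 𝔭 is a minimal prime of the ideal Ann_R(S) (i.e., 𝔭 ∈ Min(R/Ann_R S)), then 𝔭 is an attached prime of S. -/
noncomputable section
open CategoryTheory

namespace Paper

variable (R : Type) [CommRing R]

/-- The `i`-th local cohomology of the `R`-module `M` with respect to the ideal `I`. -/
abbrev H (I : Ideal R) (i : ℕ) (M : Type) [AddCommGroup M] [Module R M] : ModuleCat R :=
  (localCohomology I i).obj (ModuleCat.of R M)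

/-- `N` is a `p`-secondary submodule of `M`: it is nonzero, every `r : R` acts on it either
surjectively or nilpotently, and `p` is the radical of its annihilator. -/
def IsSecondaryFor {M : Type} [AddCommGroup M] [Module R M]
    (N : Submodule R M) (p : Ideal R) : Prop :=
  N ≠ ⊥ ∧
  (∀ r : R, (∀ m ∈ N, ∃ n ∈ N, r • n = m) ∨ (∃ k : ℕ, ∀ m ∈ N, r ^ k • m = 0)) ∧
  N.annihilator.radical = p

/-- A minimal secondary representation of the module `M`. -/
structure MinSecRep (M : Type) [AddCommGroup M] [Module R M] where
  n : ℕ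
  S : Fin n → Submodule R M
  p : Fin n → Ideal R
  prime : ∀ i, (p i).IsPrime
  sec : ∀ i, IsSecondaryFor R (S i) (p i)
  sum : (⨆ i, S i) = ⊤
  inj : Function.Injective p
  irred : ∀ j, ¬ (S j ≤ ⨆ i ∈ ({j}ᶜ : Set (Fin n)), S i)

/-- `M` is representable: it is a (finite) sum of secondary submodules. -/
def IsRepresentable (M : Type) [AddCommGroup M] [Module R M] : Prop :=
  ∃ (n : ℕ) (S : Fin n → Submodule R M) (p : Fin n → Ideal R),
    (∀ i, (p i).IsPrime) ∧ (∀ i, IsSecondaryFor R (S i) (p i)) ∧ (⨆ i, S i) = ⊤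

/-- The set of attached primes of `M`: the primes occurring in a minimal secondary
representation of `M`. -/
def attached (M : Type) [AddCommGroup M] [Module R M] : Set (Ideal R) :=
  {q | ∃ (rep : MinSecRep R M) (i : Fin rep.n), rep.p i = q}

/-- The coheight (dimension of `R/I`): Krull dimension of the set of primes containing `I`. -/
def coheight (I : Ideal R) : WithBot ℕ∞ :=
  Order.krullDim {p : Ideal R // p.IsPrime ∧ I ≤ p}

/-- The Krull dimension of the ring `R`. -/
def ringDim : WithBot ℕ∞ := Order.krullDim {p : Ideal R // p.IsPrime}

/-- The Krull dimension of (the support of) the finitely generated module `M`. -/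
def dimMod (M : Type) [AddCommGroup M] [Module R M] : WithBot ℕ∞ :=
  coheight R (Module.annihilator R M)

/-- The dimension of the localized module `M_q`: chains of primes in the support of `M`
contained in `q`. -/
def dimModAt (M : Type) [AddCommGroup M] [Module R M] (q : Ideal R) : WithBot ℕ∞ :=
  Order.krullDim {p : Ideal R // p.IsPrime ∧ Module.annihilator R M ≤ p ∧ p ≤ q}

/-- The support of a finitely generated module: primes containing the annihilator. -/
def supp (M : Type) [AddCommGroup M] [Module R M] : Set (Ideal R) :=
  {p | p.IsPrime ∧ Module.annihilator R M ≤ p}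

/-- `Min M`: minimal primes of the support of `M`. -/
def minSupp (M : Type) [AddCommGroup M] [Module R M] : Set (Ideal R) :=
  (Module.annihilator R M).minimalPrimes

/-- `Assh M`: primes in the support of maximal coheight. -/
def assh (M : Type) [AddCommGroup M] [Module R M] : Set (Ideal R) :=
  {p | p ∈ supp R M ∧ coheight R p = dimMod R M}

open RingTheory.Sequence in
/-- Depth of `M` with respect to the ideal `J`: supremum of the lengths of `M`-regular
sequences contained in `J`. -/
def depthOn (J : Ideal R) (M : Type) [AddCommGroup M] [Module R M] : ℕ∞ :=
  ⨆ l ∈ {l : List R | (∀ x ∈ l, x ∈ J) ∧ IsRegular M l}, (l.length : ℕ∞)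

/-- `M` is a Cohen–Macaulay module over the local ring `R`: depth = dimension. -/
def IsCMLocalMod [IsLocalRing R] (M : Type) [AddCommGroup M] [Module R M] : Prop :=
  (depthOn R (IsLocalRing.maximalIdeal R) M : WithBot ℕ∞) = dimMod R M

/-- `R` is a Cohen–Macaulay local ring: it is local and its depth (w.r.t. its Jacobson
radical, which is the maximal ideal) equals its Krull dimension. -/
def IsCMLocalRing : Prop :=
  IsLocalRing R ∧ ((depthOn R ((⊥ : Ideal R).jacobson) R : WithBot ℕ∞) = ringDim R)

/-- `R` is a Cohen–Macaulay ring: all of its localizations at primes are CM local rings. -/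
def IsCMRing : Prop :=
  ∀ (p : Ideal R) [p.IsPrime], IsCMLocalRing (Localization.AtPrime p)

/-- `M` is an equidimensional module: every minimal prime of its support has coheight equal
to the dimension of `M`. -/
def IsEquidim (M : Type) [AddCommGroup M] [Module R M] : Prop :=
  ∀ q ∈ minSupp R M, coheight R q = dimMod R M

/-- `R` is catenary: any two saturated chains of primes with the same endpoints have the
same length. -/
def IsCatenary : Prop :=
  ∀ (c₁ c₂ : LTSeries {p : Ideal R // p.IsPrime}),
    c₁.head = c₂.head → c₁.last = c₂.last →
    (∀ i : Fin c₁.length, c₁.toFun i.castSucc ⋖ c₁.toFun i.succ) →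
    (∀ i : Fin c₂.length, c₂.toFun i.castSucc ⋖ c₂.toFun i.succ) →
    c₁.length = c₂.length

/-- `R` is universally catenary: every finitely generated `R`-algebra is catenary. -/
def IsUnivCatenary : Prop :=
  ∀ (A : Type) [CommRing A] [Algebra R A], Algebra.FiniteType R A → IsCatenary A

/-- `x` is a uniform local cohomological annihilator of `M`: `x` avoids all minimal primes
of `M` and, for every maximal ideal `m`, kills `H^i_m(M)` for all `i < dim M_m`. -/
def IsULCA (M : Type) [AddCommGroup M] [Module R M] (x : R) : Prop :=
  (∀ p ∈ minSupp R M, x ∉ p) ∧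
  ∀ (m : Ideal R), m.IsMaximal → ∀ i : ℕ, (i : WithBot ℕ∞) < dimModAt R M m →
    ∀ y : H R m i M, x • y = 0

/-- `M` has a uniform local cohomological annihilator. -/
def HasULCA (M : Type) [AddCommGroup M] [Module R M] : Prop := ∃ x, IsULCA R M x

/-- `R/p` has a uniform local cohomological annihilator (local case): some `x ∉ p` kills
`H^i_𝔪(R/p)` for all `i < dim R/p`. -/
def HasULCAQuot [IsLocalRing R] (p : Ideal R) : Prop :=
  ∃ x ∉ p, ∀ i : ℕ, (i : WithBot ℕ∞) < coheight R p →
    ∀ y : H R (IsLocalRing.maximalIdeal R) i (R ⧸ p), x • y = 0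

/-- `M` is generalized Cohen–Macaulay over the local ring `R`: a power of the maximal ideal
kills all local cohomology below the dimension. -/
def IsGCM [IsLocalRing R] (M : Type) [AddCommGroup M] [Module R M] : Prop :=
  ∃ n : ℕ, ∀ i : ℕ, (i : WithBot ℕ∞) < dimMod R M →
    ∀ a ∈ (IsLocalRing.maximalIdeal R) ^ n,
      ∀ y : H R (IsLocalRing.maximalIdeal R) i M, a • y = 0

end Paper

/-!
A secondary representation of minimal length is minimal: two summands with the same prime
could be merged, and a redundant summand dropped. For any representation `S = ∑ Sᵢ` with `Sᵢ`
being `pᵢ`-secondary, `rad (Ann S) = ⋂ pᵢ`; a prime minimal over `Ann S` therefore contains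
some `pᵢ ⊇ Ann S`, and minimality makes it equal to that `pᵢ`.
-/

namespace Paper

variable {R : Type} [CommRing R] {M : Type} [AddCommGroup M] [Module R M]

def IsSecRep {n : ℕ} (S : Fin n → Submodule R M) (p : Fin n → Ideal R) : Prop :=
  (∀ i, (p i).IsPrime) ∧ (∀ i, IsSecondaryFor R (S i) (p i)) ∧ (⨆ i, S i) = ⊤

theorem mem_radical_annihilator_iff {N : Submodule R M} {r : R} :
    r ∈ N.annihilator.radical ↔ ∃ k : ℕ, ∀ m ∈ N, r ^ k • m = 0 := by
  simp only [Ideal.mem_radical_iff, Submodule.mem_annihilator]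

namespace IsSecondaryFor

variable {N N₁ N₂ : Submodule R M} {p : Ideal R}

theorem exists_smul_eq (h : IsSecondaryFor R N p) {r : R} (hr : r ∉ p) :
    ∀ m ∈ N, ∃ n ∈ N, r • n = m :=
  (h.2.1 r).resolve_right fun hnil => hr (h.2.2 ▸ mem_radical_annihilator_iff.mpr hnil)

theorem sup (h₁ : IsSecondaryFor R N₁ p) (h₂ : IsSecondaryFor R N₂ p) :
    IsSecondaryFor R (N₁ ⊔ N₂) p := by
  have hrad : (N₁ ⊔ N₂).annihilator.radical = p := by
    rw [Submodule.annihilator_sup, Ideal.radical_inf, h₁.2.2, h₂.2.2, inf_idem]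
  refine ⟨fun hbot => h₁.1 (eq_bot_iff.mpr (hbot ▸ le_sup_left)), fun r => ?_, hrad⟩
  by_cases hr : r ∈ p
  · exact Or.inr (mem_radical_annihilator_iff.mp (hrad ▸ hr))
  · refine Or.inl fun m hm => ?_
    obtain ⟨m₁, hm₁, m₂, hm₂, rfl⟩ := Submodule.mem_sup.mp hm
    obtain ⟨n₁, hn₁, rfl⟩ := h₁.exists_smul_eq hr m₁ hm₁
    obtain ⟨n₂, hn₂, rfl⟩ := h₂.exists_smul_eq hr m₂ hm₂
    exact ⟨n₁ + n₂, Submodule.add_mem_sup hn₁ hn₂, smul_add r n₁ n₂⟩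

end IsSecondaryFor

theorem radical_annihilator_eq_inf {ι : Type*} [Fintype ι] {S : ι → Submodule R M}
    {p : ι → Ideal R} (hS : ∀ i, IsSecondaryFor R (S i) (p i)) (hsum : (⨆ i, S i) = ⊤) :
    (Module.annihilator R M).radical = Finset.univ.inf p := by
  rw [← Submodule.annihilator_top, ← hsum, Submodule.annihilator_iSup,
    ← Finset.inf_univ_eq_iInf, ← Ideal.radicalInfTopHom_apply, map_finset_inf]
  exact Finset.inf_congr rfl fun i _ => (hS i).2.2

theorem iSup_le_iSup_of_succAbove {α : Type*} [CompleteLattice α] {n : ℕ} {f : Fin (n + 1) → α}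
    {g : Fin n → α} (i : Fin (n + 1)) (hi : f i ≤ ⨆ k, g k)
    (hle : ∀ k, f (i.succAbove k) ≤ g k) : ⨆ l, f l ≤ ⨆ k, g k :=
  iSup_le fun l => Fin.succAboveCases i hi (fun k => (hle k).trans (le_iSup g k)) l

namespace IsSecRep

variable {n : ℕ} {S : Fin (n + 1) → Submodule R M} {p : Fin (n + 1) → Ideal R}

/-- Two summands with the same prime merge into one. -/
theorem exists_of_prime_eq (h : IsSecRep S p) {i j : Fin (n + 1)} (hij : i ≠ j)
    (hp : p i = p j) : ∃ (S' : Fin n → Submodule R M) (p' : Fin n → Ideal R), IsSecRep S' p' := by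
  obtain ⟨k, rfl⟩ := Fin.exists_succAbove_eq hij.symm
  refine ⟨Function.update (S ∘ i.succAbove) k (S i ⊔ S (i.succAbove k)), p ∘ i.succAbove,
    fun _ => h.1 _, fun l => ?_, top_unique (h.2.2 ▸ iSup_le_iSup_of_succAbove i ?_ fun l => ?_)⟩
  · rcases eq_or_ne l k with rfl | hl
    · simpa using (hp ▸ h.2.1 i).sup (h.2.1 _)
    · simpa [Function.update_of_ne hl] using h.2.1 _
  · exact le_sup_left.trans ((Function.update_self k _ (S ∘ i.succAbove)).symm.trans_le
      (le_iSup _ k))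
  · rcases eq_or_ne l k with rfl | hl
    · simp
    · simp [Function.update_of_ne hl]

theorem exists_of_le_iSup (h : IsSecRep S p) {j : Fin (n + 1)}
    (hj : S j ≤ ⨆ i ∈ ({j}ᶜ : Set (Fin (n + 1))), S i) :
    ∃ (S' : Fin n → Submodule R M) (p' : Fin n → Ideal R), IsSecRep S' p' := by
  rw [← Fin.range_succAbove j, iSup_range] at hj
  exact ⟨S ∘ j.succAbove, p ∘ j.succAbove, fun _ => h.1 _, fun _ => h.2.1 _,
    top_unique (h.2.2 ▸ iSup_le_iSup_of_succAbove j hj fun _ => le_rfl)⟩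

end IsSecRep

theorem IsSecRep.nonempty_minSecRep {n : ℕ} {S : Fin n → Submodule R M} {p : Fin n → Ideal R}
    (h : IsSecRep S p)
    (hmin : ∀ m < n, ∀ (S' : Fin m → Submodule R M) (p' : Fin m → Ideal R), ¬ IsSecRep S' p') :
    Nonempty (MinSecRep R M) := by
  cases n with
  | zero => exact ⟨⟨0, S, p, h.1, h.2.1, h.2.2, fun i => i.elim0, fun i => i.elim0⟩⟩
  | succ m =>
    refine ⟨⟨m + 1, S, p, h.1, h.2.1, h.2.2, fun i j hp => ?_, fun j hj => ?_⟩⟩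
    · by_contra hij
      obtain ⟨S', p', h'⟩ := h.exists_of_prime_eq hij hp
      exact hmin m m.lt_succ_self S' p' h'
    · obtain ⟨S', p', h'⟩ := h.exists_of_le_iSup hj
      exact hmin m m.lt_succ_self S' p' h'

theorem IsRepresentable.nonempty_minSecRep (h : IsRepresentable R M) :
    Nonempty (MinSecRep R M) := by
  classical
  have hex : ∃ n, ∃ (S : Fin n → Submodule R M) (p : Fin n → Ideal R), IsSecRep S p := h
  obtain ⟨S, p, hS⟩ := Nat.find_spec hex
  exact hS.nonempty_minSecRep fun m hm S' p' h' => Nat.find_min hex hm ⟨S', p', h'⟩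

end Paper

theorem min_ann_mem_attached_general (R : Type) [CommRing R]
    (S : Type) [AddCommGroup S] [Module R S]
    (hrep : Paper.IsRepresentable R S)
    (p : Ideal R) (hp : p ∈ (Module.annihilator R S).minimalPrimes) :
    p ∈ Paper.attached R S := by
  obtain ⟨rep⟩ := hrep.nonempty_minSecRep
  have hrad := Paper.radical_annihilator_eq_inf rep.sec rep.sum
  obtain ⟨i, -, hi⟩ := hp.1.1.inf_le'.mp (hrad ▸ hp.1.1.radical_le_iff.mpr hp.1.2)
  have hann : Module.annihilator R S ≤ rep.p i :=
    Ideal.le_radical.trans (hrad ▸ Finset.inf_le (Finset.mem_univ i))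
  exact ⟨rep, i, le_antisymm hi (hp.2 ⟨rep.prime i, hann⟩ hi)⟩

/-- If `S` is a representable module over a commutative Noetherian ring `R` and `p` is a
minimal prime over the annihilator of `S`, then `p` is an attached prime of `S`. -/
theorem min_ann_mem_attached (R : Type) [CommRing R] [IsNoetherianRing R]
    (S : Type) [AddCommGroup S] [Module R S]
    (hrep : Paper.IsRepresentable R S)
    (p : Ideal R) (hp : p ∈ (Module.annihilator R S).minimalPrimes) :
    p ∈ Paper.attached R S :=
  min_ann_mem_attached_general R S hrep p hp
end
end

section
/- Let (R,𝔪) be a Noetherian local ring and S an Artinian representable R-module. Then S has finite length if and only if Att_R(S) ⊆ {𝔪}. -/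
noncomputable section
open CategoryTheory

namespace PaperAux
open Paper
variable {R : Type} [CommRing R] {M : Type} [AddCommGroup M] [Module R M]

lemma sec_nilp {N : Submodule R M} {p : Ideal R}
    (hsec : IsSecondaryFor R N p) {r : R} (hr : r ∈ p) : ∃ k, ∀ m ∈ N, r ^ k • m = 0 := by
  rw [← hsec.2.2, Ideal.mem_radical_iff] at hr
  obtain ⟨n, hn⟩ := hr
  exact ⟨n, fun m hm => Submodule.mem_annihilator.mp hn m hm⟩

lemma sec_surj {N : Submodule R M} {p : Ideal R} (hp : p.IsPrime)
    (hsec : IsSecondaryFor R N p) {r : R} (hr : r ∉ p) :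
    ∀ m ∈ N, ∃ n ∈ N, r • n = m := by
  rcases hsec.2.1 r with h | ⟨k, hk⟩
  · exact h
  · exfalso
    apply hr
    have h1 : r ^ k ∈ N.annihilator := Submodule.mem_annihilator.mpr hk
    have h2 : r ^ k ∈ p := hsec.2.2 ▸ Ideal.le_radical h1
    exact hp.mem_of_pow_mem _ h2

lemma sec_sup {N₁ N₂ : Submodule R M} {p : Ideal R}
    (hp : p.IsPrime) (h1 : IsSecondaryFor R N₁ p) (h2 : IsSecondaryFor R N₂ p) :
    IsSecondaryFor R (N₁ ⊔ N₂) p := by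
  have nilp : ∀ r ∈ p, ∃ k, ∀ m ∈ N₁ ⊔ N₂, r ^ k • m = 0 := by
    intro r hr
    obtain ⟨k₁, hk₁⟩ := sec_nilp h1 hr
    obtain ⟨k₂, hk₂⟩ := sec_nilp h2 hr
    refine ⟨k₁ + k₂, fun m hm => ?_⟩
    obtain ⟨a, ha, b, hb, rfl⟩ := Submodule.mem_sup.mp hm
    have ha' : r ^ (k₁ + k₂) • a = 0 := by
      rw [pow_add, mul_comm, mul_smul, hk₁ a ha, smul_zero]
    have hb' : r ^ (k₁ + k₂) • b = 0 := by
      rw [pow_add, mul_smul, hk₂ b hb, smul_zero]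
    rw [smul_add, ha', hb', add_zero]
  refine ⟨?_, ?_, ?_⟩
  · intro h
    exact h1.1 (le_bot_iff.mp (h ▸ le_sup_left))
  · intro r
    by_cases hr : r ∈ p
    · exact Or.inr (nilp r hr)
    · left
      intro m hm
      obtain ⟨a, ha, b, hb, rfl⟩ := Submodule.mem_sup.mp hm
      obtain ⟨a', ha', rfl⟩ := sec_surj hp h1 hr a ha
      obtain ⟨b', hb', rfl⟩ := sec_surj hp h2 hr b hb
      exact ⟨a' + b', Submodule.mem_sup.mpr ⟨a', ha', b', hb', rfl⟩, by rw [smul_add]⟩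
  · refine le_antisymm ?_ ?_
    · have h' := Ideal.radical_mono (Submodule.annihilator_mono (le_sup_left : N₁ ≤ N₁ ⊔ N₂))
      rw [h1.2.2] at h'
      exact h'
    · intro r hr
      obtain ⟨k, hk⟩ := nilp r hr
      rw [Ideal.mem_radical_iff]
      exact ⟨k, Submodule.mem_annihilator.mpr hk⟩

lemma exists_minSecRep_aux :
    ∀ (n : ℕ) (Sf : Fin n → Submodule R M) (pf : Fin n → Ideal R),
      (∀ i, (pf i).IsPrime) → (∀ i, IsSecondaryFor R (Sf i) (pf i)) →
      (⨆ i, Sf i) = ⊤ → Nonempty (MinSecRep R M) := by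
  intro n
  induction n using Nat.strong_induction_on with
  | _ n ih =>
  intro Sf pf hp hsec hsum
  by_cases hred : ∃ j, Sf j ≤ ⨆ i ∈ ({j}ᶜ : Set (Fin n)), Sf i
  · obtain ⟨j, hj⟩ := hred
    obtain ⟨m, rfl⟩ : ∃ m, n = m + 1 := ⟨n - 1, (Nat.succ_pred_eq_of_pos j.pos).symm⟩
    refine ih m (Nat.lt_succ_self m) (fun k => Sf (j.succAbove k)) (fun k => pf (j.succAbove k))
      (fun k => hp _) (fun k => hsec _) ?_
    rw [eq_top_iff, ← hsum]
    refine iSup_le fun i => ?_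
    rcases eq_or_ne i j with rfl | hij
    · refine hj.trans (iSup₂_le fun i hi => ?_)
      obtain ⟨k, hk⟩ := Fin.exists_succAbove_eq (show i ≠ _ from hi)
      exact le_iSup_of_le k (le_of_eq (congrArg Sf hk.symm))
    · obtain ⟨k, hk⟩ := Fin.exists_succAbove_eq hij
      exact le_iSup_of_le k (le_of_eq (congrArg Sf hk.symm))
  · by_cases hdup : ∃ i j, i ≠ j ∧ pf i = pf j
    · obtain ⟨i, j, hij, hpij⟩ := hdup
      obtain ⟨m, rfl⟩ : ∃ m, n = m + 1 := ⟨n - 1, (Nat.succ_pred_eq_of_pos j.pos).symm⟩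
      have hsecj : IsSecondaryFor R (Sf j) (pf i) := by rw [hpij]; exact hsec j
      refine ih m (Nat.lt_succ_self m)
        (fun k => if j.succAbove k = i then Sf i ⊔ Sf j else Sf (j.succAbove k))
        (fun k => pf (j.succAbove k)) (fun k => hp _) (fun k => ?_) ?_
      · by_cases hk : j.succAbove k = i
        · simpa [hk] using sec_sup (hp i) (hsec i) hsecj
        · simpa [hk] using hsec (j.succAbove k)
      · rw [eq_top_iff, ← hsum]
        refine iSup_le fun l => ?_
        rcases eq_or_ne l j with rfl | hlj
        · obtain ⟨k, hk⟩ := Fin.exists_succAbove_eq hij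
          refine le_iSup_of_le k ?_
          simpa [hk] using (le_sup_right : Sf l ≤ Sf i ⊔ Sf l)
        · obtain ⟨k, hk⟩ := Fin.exists_succAbove_eq hlj
          refine le_iSup_of_le k ?_
          by_cases hk' : j.succAbove k = i
          · have hli : l = i := hk.symm.trans hk'
            rw [hli]
            simpa [hk'] using (le_sup_left : Sf i ≤ Sf i ⊔ Sf j)
          · have hli : l ≠ i := fun h => hk' (hk.trans h)
            simp [hk, hli]
    · exact ⟨⟨n, Sf, pf, hp, hsec, hsum,
        fun a b hab => by by_contra hne; exact hdup ⟨a, b, hne, hab⟩,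
        fun j hj => hred ⟨j, hj⟩⟩⟩

lemma exists_minSecRep (h : IsRepresentable R M) : Nonempty (MinSecRep R M) := by
  obtain ⟨n, Sf, pf, hp, hsec, hsum⟩ := h
  exact exists_minSecRep_aux n Sf pf hp hsec hsum

lemma isNoetherian_of_max_smul [IsLocalRing R] [IsArtinian R M]
    (h : ∀ a ∈ IsLocalRing.maximalIdeal R, ∀ m : M, a • m = 0) :
    IsNoetherian R M := by
  haveI hss : IsSemisimpleModule R M := by
    apply IsSemisimpleModule.of_sSup_simples_eq_top
    rw [eq_top_iff]
    intro m _
    rcases eq_or_ne m 0 with rfl | hm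
    · exact zero_mem _
    · have hker : LinearMap.ker (LinearMap.toSpanSingleton R M m) =
          IsLocalRing.maximalIdeal R := by
        refine le_antisymm (IsLocalRing.le_maximalIdeal ?_) ?_
        · intro hk
          apply hm
          have h1 : (1 : R) ∈ LinearMap.ker (LinearMap.toSpanSingleton R M m) :=
            hk ▸ Submodule.mem_top
          simpa using h1
        · intro a ha
          simp [LinearMap.mem_ker, h a ha]
      have hsimple : IsSimpleModule R (R ⧸ LinearMap.ker (LinearMap.toSpanSingleton R M m)) := by
        rw [isSimpleModule_iff_isCoatom, hker]
        exact Ideal.isMaximal_def.mp (IsLocalRing.maximalIdeal.isMaximal R)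
      have hsimple' : IsSimpleModule R (Submodule.span R {m} : Submodule R M) :=
        IsSimpleModule.congr
          ((LinearEquiv.ofEq _ _ (LinearMap.span_singleton_eq_range R M m)).trans
            (LinearMap.quotKerEquivRange _).symm)
      have hmem : (Submodule.span R {m} : Submodule R M) ∈
          {N : Submodule R M | IsSimpleModule R N} := hsimple'
      exact le_sSup hmem (Submodule.mem_span_singleton_self m)
  have tf := (IsSemisimpleModule.finite_tfae (R := R) (M := M)).out 2 1
  exact tf.mp inferInstance

lemma isNoetherian_of_pow_smul [IsLocalRing R] :
    ∀ (k : ℕ) (M : Type) [AddCommGroup M] [Module R M] [IsArtinian R M],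
      (∀ a ∈ IsLocalRing.maximalIdeal R ^ k, ∀ m : M, a • m = 0) → IsNoetherian R M := by
  intro k
  induction k with
  | zero =>
    intro M _ _ _ h
    haveI : Subsingleton M := ⟨fun a b => by
      have ha := h 1 (by rw [pow_zero, Ideal.one_eq_top]; exact Submodule.mem_top) a
      have hb := h 1 (by rw [pow_zero, Ideal.one_eq_top]; exact Submodule.mem_top) b
      rw [one_smul] at ha hb
      rw [ha, hb]⟩
    haveI : Finite M := Finite.of_subsingleton
    exact isNoetherian_of_finite R M
  | succ k ihk =>
    intro M _ _ _ h
    set N := IsLocalRing.maximalIdeal R • (⊤ : Submodule R M) with hN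
    have key : ∀ a ∈ IsLocalRing.maximalIdeal R ^ k, ∀ x ∈ N, a • x = 0 := by
      intro a ha x hx
      refine Submodule.smul_induction_on hx (fun r hr t _ => ?_) (fun x y hx' hy' => ?_)
      · rw [smul_smul]
        refine h (a * r) ?_ t
        rw [pow_succ]
        exact Ideal.mul_mem_mul ha hr
      · rw [smul_add, hx', hy', add_zero]
    have hNoeN : IsNoetherian R N := by
      apply ihk
      intro a ha x
      exact Subtype.ext (by simpa using key a ha x x.2)
    have hNoeQ : IsNoetherian R (M ⧸ N) := by
      apply isNoetherian_of_max_smul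
      intro a ha x
      obtain ⟨y, rfl⟩ := Submodule.mkQ_surjective N x
      have : a • y ∈ N := Submodule.smul_mem_smul ha Submodule.mem_top
      rw [Submodule.mkQ_apply, ← Submodule.Quotient.mk_smul,
        Submodule.Quotient.mk_eq_zero]
      exact this
    exact (isNoetherian_iff_submodule_quotient N).mpr ⟨hNoeN, hNoeQ⟩

end PaperAux

/-- Over a Noetherian local ring, an Artinian representable module has finite length iff
all of its attached primes are the maximal ideal. -/
theorem finiteLength_iff_attached_subset (R : Type) [CommRing R] [IsNoetherianRing R]
    [IsLocalRing R] (S : Type) [AddCommGroup S] [Module R S] [IsArtinian R S]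
    (hrep : Paper.IsRepresentable R S) :
    IsFiniteLength R S ↔ Paper.attached R S ⊆ {IsLocalRing.maximalIdeal R} := by
  constructor
  · intro hfl q hq
    obtain ⟨rep, i, rfl⟩ := hq
    obtain ⟨hNoe, hArt⟩ := isFiniteLength_iff_isNoetherian_isArtinian.mp hfl
    have hfg : (rep.S i).FG := by
      haveI := hNoe
      exact IsNoetherian.noetherian _
    have hle : IsLocalRing.maximalIdeal R ≤ rep.p i := by
      intro r hr
      rcases (rep.sec i).2.1 r with hs | ⟨k, hk⟩
      · exfalso
        apply (rep.sec i).1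
        refine Submodule.eq_bot_of_le_smul_of_le_jacobson_bot (IsLocalRing.maximalIdeal R) _
          hfg ?_ ?_
        · intro m hm
          obtain ⟨nn, hnn, hrn⟩ := hs m hm
          rw [← hrn]
          exact Submodule.smul_mem_smul hr hnn
        · rw [IsLocalRing.jacobson_eq_maximalIdeal ⊥ bot_ne_top]
      · rw [← (rep.sec i).2.2, Ideal.mem_radical_iff]
        exact ⟨k, Submodule.mem_annihilator.mpr hk⟩
    have heq := (IsLocalRing.maximalIdeal.isMaximal R).eq_of_le (rep.prime i).ne_top hle
    exact Set.mem_singleton_iff.mpr heq.symm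
  · intro hsub
    obtain ⟨rep⟩ := PaperAux.exists_minSecRep hrep
    have hm : ∀ i, rep.p i = IsLocalRing.maximalIdeal R := fun i =>
      Set.mem_singleton_iff.mp (hsub ⟨rep, i, rfl⟩)
    have hpow : ∀ i : Fin rep.n, ∃ k, IsLocalRing.maximalIdeal R ^ k ≤ (rep.S i).annihilator := by
      intro i
      obtain ⟨k, hk⟩ := Ideal.exists_radical_pow_le_of_fg (rep.S i).annihilator
        (IsNoetherian.noetherian _)
      rw [(rep.sec i).2.2, hm i] at hk
      exact ⟨k, hk⟩
    choose k hk using hpow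
    have hkill : ∀ a ∈ IsLocalRing.maximalIdeal R ^ (Finset.univ.sup k), ∀ s : S, a • s = 0 := by
      intro a ha s
      have hs : s ∈ (⊤ : Submodule R S) := Submodule.mem_top
      rw [← rep.sum] at hs
      have hann : a ∈ (⨆ i, rep.S i).annihilator := by
        rw [Submodule.annihilator_iSup]
        refine Submodule.mem_iInf _ |>.mpr fun i => ?_
        exact hk i (Ideal.pow_le_pow_right (Finset.le_sup (Finset.mem_univ i)) ha)
      exact Submodule.mem_annihilator.mp hann s hs
    have hNoe : IsNoetherian R S :=
      PaperAux.isNoetherian_of_pow_smul (Finset.univ.sup k) S hkill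
    rw [isFiniteLength_iff_isNoetherian_isArtinian]
    exact ⟨hNoe, inferInstance⟩
end
end

section
/- Let (R,𝔪) be a Noetherian local ring, M a finitely generated R-module, and 𝔔 a minimal prime of the R̂-module M̂. Then 𝔔 is a minimal prime of the ideal (𝔔 ∩ R)·R̂, i.e., 𝔔 ∈ Min(R̂/(𝔔 ∩ R)R̂). -/
noncomputable section
open CategoryTheory

/-!
Since `R̂` is flat over `R` and `M̂ ≅ R̂ ⊗[R] M` for finite `M`, the annihilator of `M̂` is the
extension `(Ann M)·R̂`. A prime `Q` minimal over `(Ann M)·R̂` contracts to a prime containing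
`Ann M`, so `(Ann M)·R̂ ⊆ (Q ∩ R)·R̂ ⊆ Q`, and minimality over the smaller ideal gives minimality
over the larger one.
-/

universe u

open TensorProduct

theorem Ideal.mem_minimalPrimes_map_comap_of_mem_minimalPrimes_map {R S : Type*} [CommSemiring R]
    [CommSemiring S] {f : R →+* S} {I : Ideal R} {Q : Ideal S} (hQ : Q ∈ (I.map f).minimalPrimes) :
    Q ∈ ((Q.comap f).map f).minimalPrimes :=
  ⟨⟨hQ.1.1, Ideal.map_comap_le⟩, fun _ hQ' hle ↦
    hQ.2 ⟨hQ'.1, (Ideal.map_mono (Ideal.le_comap_of_map_le hQ.1.2)).trans hQ'.2⟩ hle⟩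

theorem Module.annihilator_eq_ker_pi_toSpanSingleton {R M : Type*} [CommRing R] [AddCommGroup M]
    [Module R M] {s : Set M} (hs : Submodule.span R s = ⊤) :
    Module.annihilator R M =
      LinearMap.ker (LinearMap.pi fun g : s ↦ LinearMap.toSpanSingleton R M g) := by
  rw [← Submodule.annihilator_top, ← hs, Submodule.annihilator_span, LinearMap.ker_pi]

section BaseChange

variable (R S M : Type*) [CommRing R] [CommRing S] [Algebra R S] [AddCommGroup M] [Module R M]

theorem Module.map_annihilator_le_annihilator_tensorProduct :
    (Module.annihilator R M).map (algebraMap R S) ≤ Module.annihilator S (S ⊗[R] M) := by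
  rw [Ideal.map_le_iff_le_comap, Module.comap_annihilator]
  intro r hr
  rw [Module.mem_annihilator] at hr ⊢
  intro t
  induction t using TensorProduct.induction_on with
  | zero => rw [smul_zero]
  | tmul s m => rw [← tmul_smul, hr, tmul_zero]
  | add a b ha hb => rw [smul_add, ha, hb, add_zero]

/-- For generators `g` of `M`, `r ↦ (r • g)_g` induces an embedding `R ⧸ Ann M ↪ Mⁿ`. Flatness
keeps `S ⧸ (Ann M)·S ≅ S ⊗ (R ⧸ Ann M)` embedded in `S ⊗ Mⁿ ≅ (S ⊗ M)ⁿ`, where the image of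
`x ∈ Ann (S ⊗ M)` is `(x ⊗ g)_g = 0`. -/
theorem Module.annihilator_tensorProduct_le_map_of_flat [Module.Flat R S] [Module.Finite R M] :
    Module.annihilator S (S ⊗[R] M) ≤ (Module.annihilator R M).map (algebraMap R S) := by
  classical
  obtain ⟨s, hs⟩ := Module.Finite.fg_top (R := R) (M := M)
  set φ := LinearMap.pi fun g : (s : Set M) ↦ LinearMap.toSpanSingleton R M g
  rw [Module.annihilator_eq_ker_pi_toSpanSingleton hs]
  intro x hx
  have hφ : Function.Injective (LinearMap.lTensor S ((LinearMap.ker φ).liftQ φ le_rfl)) :=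
    Module.Flat.lTensor_preserves_injective_linearMap _ <| LinearMap.ker_eq_bot.mp <|
      Submodule.ker_liftQ_eq_bot _ _ _ le_rfl
  have hx_gens : x ⊗ₜ[R] (φ 1) = 0 := by
    apply (TensorProduct.piRight R S S _).injective
    ext g
    simpa [φ, smul_tmul'] using Module.mem_annihilator.mp hx (1 ⊗ₜ[R] (g : M))
  have hx_quot : x ⊗ₜ[R] (1 : R ⧸ LinearMap.ker φ) = 0 :=
    hφ (by rw [LinearMap.lTensor_tmul, map_zero]; exact hx_gens)
  rwa [← Algebra.TensorProduct.quotIdealMapEquivTensorQuot_mk,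
    map_eq_zero_iff _ (AlgEquiv.injective _), Ideal.Quotient.eq_zero_iff_mem] at hx_quot

theorem Module.annihilator_tensorProduct_eq_map_of_flat [Module.Flat R S] [Module.Finite R M] :
    Module.annihilator S (S ⊗[R] M) = (Module.annihilator R M).map (algebraMap R S) :=
  le_antisymm (annihilator_tensorProduct_le_map_of_flat R S M)
    (map_annihilator_le_annihilator_tensorProduct R S M)

end BaseChange

theorem AdicCompletion.annihilator_eq_map {R M : Type u} [CommRing R] [IsNoetherianRing R]
    [AddCommGroup M] [Module R M] [Module.Finite R M] (I : Ideal R) :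
    Module.annihilator (AdicCompletion I R) (AdicCompletion I M) =
      (Module.annihilator R M).map (algebraMap R (AdicCompletion I R)) := by
  have := AdicCompletion.flat_of_isNoetherian I
  rw [← (AdicCompletion.ofTensorProductEquivOfFiniteNoetherian I M).annihilator_eq,
    Module.annihilator_tensorProduct_eq_map_of_flat]

/-- If `Q` is a minimal prime of the completed module `M^`, then `Q` is a minimal prime of
the ideal `(Q ∩ R)·R^`. -/
theorem min_completion_mem_minimalPrimes (R : Type) [CommRing R] [IsNoetherianRing R]
    [IsLocalRing R] (M : Type) [AddCommGroup M] [Module R M] [Module.Finite R M]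
    (Q : Ideal (AdicCompletion (IsLocalRing.maximalIdeal R) R))
    (hQ : Q ∈ Paper.minSupp (AdicCompletion (IsLocalRing.maximalIdeal R) R)
        (AdicCompletion (IsLocalRing.maximalIdeal R) M)) :
    Q ∈ (Ideal.map (algebraMap R (AdicCompletion (IsLocalRing.maximalIdeal R) R))
        (Q.comap (algebraMap R
          (AdicCompletion (IsLocalRing.maximalIdeal R) R)))).minimalPrimes := by
  rw [Paper.minSupp, AdicCompletion.annihilator_eq_map] at hQ
  exact Ideal.mem_minimalPrimes_map_comap_of_mem_minimalPrimes_map hQ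
end
end
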